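/- Let l ≥ 4 and let H be a disjoint union of paths containing three vertex-disjoint paths of orders l−1, a, and l−2−a for some a with ⌈l/2⌉−1 ≤ a ≤ l−3. Then K_2 + H contains C_{l,l} as a subgraph. -/

import Mathlib

open SimpleGraph

/-- The adjacency spectral radius of a finite simple graph. -/
noncomputable def specRad {V : Type*} [Fintype V] [DecidableEq V] (G : SimpleGraph V) : ℝ :=
  letI := Classical.decRel G.Adj
  sSup ((fun μ : ℝ => |μ|) '' spectrum ℝ (G.adjMatrix ℝ))

/-- `G` contains a copy of `H` as a subgraph. -/
def Contains {V W : Type*} (G : SimpleGraph V) (H : SimpleGraph W) : Prop :=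
  ∃ f : W ↪ V, ∀ a b, H.Adj a b → G.Adj (f a) (f b)

/-- `G` contains `C_{l,l}`: two cycles of length `l` sharing exactly one vertex. -/
def ContainsCll {V : Type*} (G : SimpleGraph V) (l : ℕ) : Prop :=
  ∃ (u : V) (c₁ c₂ : G.Walk u u), c₁.IsCycle ∧ c₂.IsCycle ∧ c₁.length = l ∧ c₂.length = l ∧
    ∀ v, v ∈ c₁.support → v ∈ c₂.support → v = u

/-- Theta graph on `k` vertices: the cycle `0,1,…,k-1` plus a chord from `0` to `a`. -/
def thetaGraph (k a : ℕ) : SimpleGraph (Fin k) :=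
  SimpleGraph.fromRel (fun i j =>
    (j : ℕ) = (i : ℕ) + 1 ∨ ((i : ℕ) = k - 1 ∧ (j : ℕ) = 0) ∨ ((i : ℕ) = 0 ∧ (j : ℕ) = a))

/-- `G` contains some member of `Θ_k`, the set of Theta graphs on `k` vertices. -/
def ContainsTheta {V : Type*} (G : SimpleGraph V) (k : ℕ) : Prop :=
  ∃ a, 2 ≤ a ∧ a ≤ k - 2 ∧ Contains G (thetaGraph k a)

/-- The join of two graphs: all edges between the two vertex sets are added. -/
def joinG {V W : Type*} (G : SimpleGraph V) (H : SimpleGraph W) : SimpleGraph (V ⊕ W) where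
  Adj a b := match a, b with
    | Sum.inl a, Sum.inl b => G.Adj a b
    | Sum.inr a, Sum.inr b => H.Adj a b
    | Sum.inl _, Sum.inr _ => True
    | Sum.inr _, Sum.inl _ => True
  symm := ⟨by
    rintro (a | a) (b | b) h
    · exact G.adj_symm h
    · trivial
    · trivial
    · exact H.adj_symm h⟩
  loopless := ⟨by
    rintro (a | a) h
    · exact G.irrefl h
    · exact H.irrefl h⟩

/-- The disjoint union of `t` paths, the `i`-th having `f i` vertices. -/
def pathsUnion (t : ℕ) (f : ℕ → ℕ) : SimpleGraph (Σ i : Fin t, Fin (f i.1)) where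
  Adj a b := a.1 = b.1 ∧ ((a.2 : ℕ) + 1 = (b.2 : ℕ) ∨ (b.2 : ℕ) + 1 = (a.2 : ℕ))
  symm := ⟨by
    rintro ⟨i, a⟩ ⟨j, b⟩ ⟨h₁, h₂⟩
    exact ⟨h₁.symm, h₂.symm⟩⟩
  loopless := ⟨by
    rintro ⟨i, a⟩ ⟨-, h⟩
    omega⟩

/-- `H` is a minor of `G`: disjoint connected branch sets, one for each vertex of `H`,
with edges of `G` between branch sets corresponding to edges of `H`. -/
def IsMinor {V W : Type*} (H : SimpleGraph W) (G : SimpleGraph V) : Prop :=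
  ∃ B : W → Set V, (∀ w, (B w).Nonempty) ∧ (∀ w, (G.induce (B w)).Connected) ∧
    (∀ w₁ w₂, w₁ ≠ w₂ → Disjoint (B w₁) (B w₂)) ∧
    ∀ w₁ w₂, H.Adj w₁ w₂ → ∃ v₁ ∈ B w₁, ∃ v₂ ∈ B w₂, G.Adj v₁ v₂

/-- Planarity via Wagner's theorem: no `K₅` minor and no `K₃,₃` minor. -/
def IsPlanar {V : Type*} (G : SimpleGraph V) : Prop :=
  ¬ IsMinor (⊤ : SimpleGraph (Fin 5)) G ∧
  ¬ IsMinor (completeBipartiteGraph (Fin 3) (Fin 3)) G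

/-
Writing `u'`, `u''` for the two vertices of `K₂`, the paths `P_{l-1}`, `P_a`, `P_{l-2-a}` of `H`
give the closed walks `u' P_{l-1} u'` and `u' P_a u'' P_{l-2-a} u'` in `K₂ + H`, both of length `l`,
which meet only in `u'` because the three paths are vertex-disjoint.
-/

section closedWalk

variable {V : Type*} {G : SimpleGraph V}

theorem SimpleGraph.exists_isCycle_support_eq_of_isChain {u : V} {L : List V}
    (hchain : (u :: L ++ [u]).IsChain G.Adj) (hnodup : (u :: L).Nodup) (hlen : 2 ≤ L.length) :
    ∃ c : G.Walk u u, c.IsCycle ∧ c.length = L.length + 1 ∧ c.support = u :: L ++ [u] := by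
  obtain ⟨c, hsupp⟩ : ∃ c : G.Walk u u, c.support = u :: L ++ [u] :=
    ⟨(Walk.ofSupport (u :: (L ++ [u])) (List.cons_ne_nil _ _) hchain).copy rfl (by simp),
      (Walk.support_copy _ _ _).trans (Walk.support_ofSupport _ _)⟩
  have hlength : c.length = L.length + 1 := by
    simpa [hsupp] using c.length_support.symm
  refine ⟨c, Walk.isCycle_iff_isPath_tail_and_le_length.mpr ⟨?_, by omega⟩, hlength, hsupp⟩
  have hnil : ¬ c.Nil := by simp [← Walk.length_eq_zero_iff, hlength]
  rw [Walk.isPath_def, Walk.support_tail_of_not_nil _ hnil, hsupp, List.cons_append, List.tail_cons]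
  rw [List.nodup_cons] at hnodup
  exact hnodup.2.append (List.nodup_singleton u) (by simpa using hnodup.1)

theorem containsCll_of_isChain {u : V} {L₁ L₂ : List V} {l : ℕ}
    (hchain₁ : (u :: L₁ ++ [u]).IsChain G.Adj) (hchain₂ : (u :: L₂ ++ [u]).IsChain G.Adj)
    (hnodup₁ : (u :: L₁).Nodup) (hnodup₂ : (u :: L₂).Nodup) (hdisj : L₁.Disjoint L₂)
    (hlen₁ : L₁.length + 1 = l) (hlen₂ : L₂.length + 1 = l) (hl : 3 ≤ l) :
    ContainsCll G l := by
  obtain ⟨c₁, hc₁, hlen₁', hsupp₁⟩ :=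
    exists_isCycle_support_eq_of_isChain hchain₁ hnodup₁ (by omega)
  obtain ⟨c₂, hc₂, hlen₂', hsupp₂⟩ :=
    exists_isCycle_support_eq_of_isChain hchain₂ hnodup₂ (by omega)
  refine ⟨u, c₁, c₂, hc₁, hc₂, by omega, by omega, fun v hv₁ hv₂ => ?_⟩
  rw [hsupp₁] at hv₁
  rw [hsupp₂] at hv₂
  simp only [List.cons_append, List.mem_cons, List.mem_append] at hv₁ hv₂
  by_contra hvu
  exact hdisj (by tauto) (by tauto)

end closedWalk

section joinG

variable {V W : Type*} {G : SimpleGraph V} {H : SimpleGraph W}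

theorem isChain_joinG_inl_map_inr {x z : V} {L : List W} {M : List (V ⊕ W)}
    (hL : L.IsChain H.Adj) (hM : (Sum.inl z :: M).IsChain (joinG G H).Adj)
    (hxz : L ≠ [] ∨ G.Adj x z) :
    (Sum.inl x :: L.map Sum.inr ++ Sum.inl z :: M).IsChain (joinG G H).Adj := by
  refine List.IsChain.append ?_ hM ?_
  · refine (List.isChain_map_of_isChain Sum.inr (fun _ _ h => h) hL).cons ?_
    intro y hy
    obtain ⟨w, -, rfl⟩ := List.mem_map.mp (List.mem_of_mem_head? hy)
    trivial
  · intro a ha b hb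
    obtain rfl : Sum.inl z = b := by simpa using hb
    rcases L.eq_nil_or_concat with rfl | ⟨L, w, rfl⟩
    · obtain rfl : Sum.inl x = a := by simpa using ha
      exact hxz.resolve_left (not_ne_iff.mpr rfl)
    · obtain rfl : Sum.inr w = a := by simpa [List.getLast?_cons] using ha
      trivial

theorem containsCll_joinG {x y : V} (hxy : G.Adj x y) {P A B : List W}
    (hP : P.IsChain H.Adj) (hA : A.IsChain H.Adj) (hB : B.IsChain H.Adj)
    (hnodup : (P ++ A ++ B).Nodup) {l : ℕ} (hlenP : P.length + 1 = l)
    (hlenAB : A.length + B.length + 2 = l) (hl : 3 ≤ l) :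
    ContainsCll (joinG G H) l := by
  have hPne : P ≠ [] := by rintro rfl; simp at hlenP; omega
  have hback : (Sum.inl y :: B.map Sum.inr ++ [Sum.inl x]).IsChain (joinG G H).Adj :=
    isChain_joinG_inl_map_inr hB (List.isChain_singleton _) (Or.inr hxy.symm)
  refine containsCll_of_isChain (l := l) (u := Sum.inl x) (L₁ := P.map Sum.inr)
    (L₂ := A.map Sum.inr ++ Sum.inl y :: B.map Sum.inr)
    (isChain_joinG_inl_map_inr hP (List.isChain_singleton _) (Or.inl hPne))
    (by simpa using isChain_joinG_inl_map_inr hA hback (Or.inr hxy)) ?_ ?_ ?_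
    (by simpa using hlenP)
    (by simp only [List.length_append, List.length_cons, List.length_map]; omega) hl
  all_goals
    simp [List.nodup_append, List.disjoint_left, List.nodup_map_iff Sum.inr_injective, hxy.ne]
      at hnodup ⊢
    grind

end joinG

namespace pathsUnion

variable {t : ℕ} {f : ℕ → ℕ}

def path (t : ℕ) (f : ℕ → ℕ) (i : Fin t) : List (Σ i : Fin t, Fin (f i.1)) :=
  List.ofFn fun j : Fin (f i) => ⟨i, j⟩

theorem length_path (i : Fin t) : (path t f i).length = f i := by
  simp [path]

theorem mem_path {i : Fin t} {v : Σ i : Fin t, Fin (f i.1)} : v ∈ path t f i ↔ v.1 = i := by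
  obtain ⟨j, w⟩ := v
  simp only [path, List.mem_ofFn, Sigma.mk.injEq]
  exact ⟨fun ⟨_, h, _⟩ => h.symm, fun h => by subst h; exact ⟨w, rfl, HEq.rfl⟩⟩

theorem nodup_path (i : Fin t) : (path t f i).Nodup :=
  List.nodup_ofFn.mpr fun _ _ h => eq_of_heq (Sigma.mk.inj h).2

theorem disjoint_path {i j : Fin t} (hij : i ≠ j) : (path t f i).Disjoint (path t f j) :=
  fun _ hv hv' => hij ((mem_path.mp hv).symm.trans (mem_path.mp hv'))

theorem isChain_path (i : Fin t) : (path t f i).IsChain (pathsUnion t f).Adj :=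
  List.isChain_ofFn.mpr fun _ _ => ⟨rfl, Or.inl rfl⟩

end pathsUnion

theorem stmt19_general (l t a : ℕ) (hl : 4 ≤ l) (f : ℕ → ℕ)
    (ha2 : a ≤ l - 3)
    (hcont : Contains (pathsUnion t f)
      (pathsUnion 3 (fun i => if i = 0 then l - 1 else if i = 1 then a else l - 2 - a))) :
    ContainsCll (joinG (⊤ : SimpleGraph (Fin 2)) (pathsUnion t f)) l := by
  obtain ⟨e, he⟩ := hcont
  set g : ℕ → ℕ := fun i => if i = 0 then l - 1 else if i = 1 then a else l - 2 - a
  open pathsUnion in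
  have hchain (i : Fin 3) : ((path 3 g i).map e).IsChain (pathsUnion t f).Adj :=
    List.isChain_map_of_isChain e he (isChain_path i)
  open pathsUnion in
  have hnodup : (path 3 g 0 ++ path 3 g 1 ++ path 3 g 2).Nodup :=
    (nodup_path _ |>.append (nodup_path _) (disjoint_path (by decide))).append (nodup_path _)
      (List.disjoint_append_left.mpr ⟨disjoint_path (by decide), disjoint_path (by decide)⟩)
  refine containsCll_joinG (x := 0) (y := 1) (by decide) (hchain 0) (hchain 1) (hchain 2)
    (by simpa only [List.map_append] using hnodup.map e.injective) ?_ ?_ (by omega)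
  all_goals simp [pathsUnion.length_path, g]; omega

theorem stmt19 (l t a : ℕ) (hl : 4 ≤ l) (f : ℕ → ℕ) (hf : Antitone f)
    (ha1 : (l + 1) / 2 - 1 ≤ a) (ha2 : a ≤ l - 3)
    (hcont : Contains (pathsUnion t f)
      (pathsUnion 3 (fun i => if i = 0 then l - 1 else if i = 1 then a else l - 2 - a))) :
    ContainsCll (joinG (⊤ : SimpleGraph (Fin 2)) (pathsUnion t f)) l :=
  stmt19_general l t a hl f ha2 hcont
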